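/- arXiv:2206.13678 — 5 statements merged into one kernel-verified Lean document; each statement's English description precedes it below -/
import Mathlib

section
/- For every graph G containing at least one edge, every feasible solution of the LP relaxation of the POP1 model satisfies 1 + ∑_{i=1}^H g_{i,q} ≥ 2. (Adding the constraint g_{1,u} + g_{1,v} ≥ 2 − g_{1,q} for an edge uv to the derived inequality ∑_{i=1}^H g_{i,q} ≥ g_{1,u} + g_{1,v} gives ∑_{i=1}^H g_{i,q} ≥ 2 − g_{1,q} ≥ 1.) -/
open Finset

lemma pop1_tele (f : ℕ → ℝ) : ∀ H : ℕ, 2 ≤ H →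
    ∑ i ∈ Icc 2 H, (f (i - 1) - f i) = f 1 - f H := by
  intro H hH
  induction H with
  | zero => omega
  | succ n ih =>
    rcases Nat.lt_or_ge n 2 with h | h
    · interval_cases n
      · omega
      · simp
    · rw [Finset.sum_Icc_succ_top (by omega), ih h]
      simp

lemma pop1_shift (f : ℕ → ℝ) : ∀ H : ℕ, 2 ≤ H →
    ∑ i ∈ Icc 2 H, f (i - 1) = ∑ i ∈ Icc 1 (H - 1), f i := by
  intro H hH
  induction H with
  | zero => omega
  | succ n ih =>
    rcases Nat.lt_or_ge n 2 with h | h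
    · interval_cases n
      · omega
      · simp
    · rw [Finset.sum_Icc_succ_top (by omega), ih h]
      have : n + 1 - 1 = (n - 1) + 1 := by omega
      rw [this, Finset.sum_Icc_succ_top (by omega)]

/-- For every graph containing at least one edge, every feasible solution of
the LP relaxation of POP1 satisfies `1 + ∑_{i=1}^H g i q ≥ 2`. -/
theorem pop1_lp_value_ge_two {V : Type*} [Fintype V] (G : SimpleGraph V)
    (H : ℕ) (hH : 2 ≤ H) (q : V) (hedge : ∃ u v : V, G.Adj u v)
    (g : ℕ → V → ℝ)
    (hbound : ∀ i v, 0 ≤ g i v ∧ g i v ≤ 1)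
    (hgH : ∀ v : V, g H v = 0)
    (hmono : ∀ v : V, ∀ i ∈ Icc 2 H, g (i - 1) v - g i v ≥ 0)
    (hedge1 : ∀ u v : V, G.Adj u v → g 1 u + g 1 v ≥ 2 - g 1 q)
    (hedge2 : ∀ u v : V, G.Adj u v → ∀ i ∈ Icc 2 H,
      (g (i - 1) u - g i u) + (g (i - 1) v - g i v) ≤ g (i - 1) q)
    (hqmax : ∀ v : V, ∀ i ∈ Icc 1 H, g i q - g i v ≥ 0) :
    1 + ∑ i ∈ Icc 1 H, g i q ≥ 2 := by
  obtain ⟨u, v, huv⟩ := hedge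
  -- sum hedge2 over i ∈ Icc 2 H
  have hsum : ∑ i ∈ Icc 2 H, ((g (i - 1) u - g i u) + (g (i - 1) v - g i v))
      ≤ ∑ i ∈ Icc 2 H, g (i - 1) q :=
    Finset.sum_le_sum (fun i hi => hedge2 u v huv i hi)
  have hL : ∑ i ∈ Icc 2 H, ((g (i - 1) u - g i u) + (g (i - 1) v - g i v))
      = g 1 u + g 1 v := by
    rw [Finset.sum_add_distrib, pop1_tele (fun i => g i u) H hH,
      pop1_tele (fun i => g i v) H hH, hgH u, hgH v]
    ring
  have hR : ∑ i ∈ Icc 2 H, g (i - 1) q = ∑ i ∈ Icc 1 (H - 1), g i q :=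
    pop1_shift (fun i => g i q) H hH
  have hfull : ∑ i ∈ Icc 1 H, g i q = ∑ i ∈ Icc 1 (H - 1), g i q + g H q := by
    have : H = (H - 1) + 1 := by omega
    rw [this, Finset.sum_Icc_succ_top (by omega)]
    congr 2
  have hge : ∑ i ∈ Icc 1 H, g i q ≥ 2 - g 1 q := by
    have h1 := hedge1 u v huv
    rw [hfull, hgH q]
    rw [hL, hR] at hsum
    linarith
  have h1q : g 1 q ≤ 1 := (hbound 1 q).2
  linarith
end

section
/- Let k ≥ 2 and suppose G contains an odd cycle C = q, v_1, v_2, …, v_{2k}, q through the chosen vertex q (so qv_1, v_1v_2, …, v_{2k-1}v_{2k}, v_{2k}q ∈ E). Then every feasible solution of the LP relaxation of the POP1 model satisfies 1 + ∑_{i=1}^H g_{i,q} ≥ 2 + 1/(k+1). -/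
open Finset

private lemma tele_sum (f : ℕ → ℝ) : ∀ n, 1 ≤ n →
    ∑ i ∈ Icc 2 n, (f (i - 1) - f i) = f 1 - f n := by
  intro n hn
  induction n with
  | zero => omega
  | succ m ih =>
    rcases Nat.lt_or_ge m 1 with h | h
    · have : m = 0 := by omega
      subst this
      simp
    · rw [Finset.sum_Icc_succ_top (by omega : 2 ≤ m + 1), ih h]
      simp

private lemma shift_sum (f : ℕ → ℝ) : ∀ n, 1 ≤ n →
    ∑ i ∈ Icc 2 n, f (i - 1) + f n = ∑ i ∈ Icc 1 n, f i := by
  intro n hn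
  induction n with
  | zero => omega
  | succ m ih =>
    rcases Nat.lt_or_ge m 1 with h | h
    · have : m = 0 := by omega
      subst this
      simp
    · rw [Finset.sum_Icc_succ_top (by omega : 2 ≤ m + 1),
        Finset.sum_Icc_succ_top (by omega : 1 ≤ m + 1)]
      simp only [Nat.add_sub_cancel]
      linarith [ih h]

private lemma pair_sum (a : ℕ → ℝ) : ∀ k,
    ∑ m ∈ Finset.range (k + 1), (a (2 * m + 1) + a (2 * m + 2)) =
      a 1 + ∑ m ∈ Finset.range k, (a (2 * m + 2) + a (2 * m + 3)) + a (2 * (k + 1)) := by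
  intro k
  induction k with
  | zero => norm_num
  | succ m ih =>
    rw [Finset.sum_range_succ, ih, Finset.sum_range_succ]
    have e1 : 2 * (m + 1) + 1 = 2 * m + 3 := by ring
    have e2 : 2 * (m + 1) + 2 = 2 * (m + 1 + 1) := by ring
    have e3 : 2 * (m + 1) = 2 * m + 2 := by ring
    rw [e1, e2, e3]
    ring

/-- Let `k ≥ 2` and suppose `G` contains an odd cycle
`q, v 1, v 2, …, v (2k), q` through the chosen vertex `q`. Then every feasible solution of
the LP relaxation of POP1 satisfies `1 + ∑_{i=1}^H g i q ≥ 2 + 1/(k+1)`. -/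
theorem pop1_odd_cycle_bound {V : Type*} [Fintype V] (G : SimpleGraph V)
    (H : ℕ) (hH : 2 ≤ H) (q : V) (k : ℕ) (hk : 2 ≤ k) (v : ℕ → V)
    (hdist : ∀ i ∈ Icc 1 (2 * k), ∀ j ∈ Icc 1 (2 * k), i ≠ j → v i ≠ v j)
    (hvq : ∀ i ∈ Icc 1 (2 * k), v i ≠ q)
    (hadj1 : G.Adj q (v 1))
    (hadjc : ∀ j ∈ Icc 1 (2 * k - 1), G.Adj (v j) (v (j + 1)))
    (hadj2 : G.Adj (v (2 * k)) q)
    (g : ℕ → V → ℝ)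
    (hbound : ∀ i w, 0 ≤ g i w ∧ g i w ≤ 1)
    (hgH : ∀ w : V, g H w = 0)
    (hmono : ∀ w : V, ∀ i ∈ Icc 2 H, g (i - 1) w - g i w ≥ 0)
    (hedge1 : ∀ u w : V, G.Adj u w → g 1 u + g 1 w ≥ 2 - g 1 q)
    (hedge2 : ∀ u w : V, G.Adj u w → ∀ i ∈ Icc 2 H,
      (g (i - 1) u - g i u) + (g (i - 1) w - g i w) ≤ g (i - 1) q)
    (hqmax : ∀ w : V, ∀ i ∈ Icc 1 H, g i q - g i w ≥ 0) :
    1 + ∑ i ∈ Icc 1 H, g i q ≥ 2 + 1 / ((k : ℝ) + 1) := by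
  have hH1 : 1 ≤ H := by omega
  set S : ℝ := ∑ i ∈ Icc 1 H, g i q with hS
  -- Key: for every edge, g 1 u + g 1 w ≤ S
  have key : ∀ u w : V, G.Adj u w → g 1 u + g 1 w ≤ S := by
    intro u w hadj
    have h2 : ∑ i ∈ Icc 2 H, ((g (i - 1) u - g i u) + (g (i - 1) w - g i w)) ≤
        ∑ i ∈ Icc 2 H, g (i - 1) q :=
      Finset.sum_le_sum (fun i hi => hedge2 u w hadj i hi)
    rw [Finset.sum_add_distrib] at h2
    have e1 := tele_sum (fun i => g i u) H hH1
    have e2 := tele_sum (fun i => g i w) H hH1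
    have e3 := shift_sum (fun i => g i q) H hH1
    rw [e1, e2] at h2
    rw [hgH u, hgH w] at h2
    rw [hS, ← e3]
    have hq0 := (hbound H q).1
    linarith
  -- Cycle inequalities
  have hA : g 1 q + g 1 (v 1) ≤ S := key q (v 1) hadj1
  have hB : g 1 (v (2 * k)) + g 1 q ≤ S := key (v (2 * k)) q hadj2
  have hlow : ∀ m ∈ Finset.range k,
      2 - g 1 q ≤ g 1 (v (2 * m + 1)) + g 1 (v (2 * m + 2)) := by
    intro m hm
    rw [Finset.mem_range] at hm
    have hadj : G.Adj (v (2 * m + 1)) (v (2 * m + 1 + 1)) := by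
      apply hadjc
      rw [Finset.mem_Icc]
      omega
    have := hedge1 _ _ hadj
    have e : 2 * m + 1 + 1 = 2 * m + 2 := by ring
    rw [e] at this
    linarith
  have hup : ∀ m ∈ Finset.range (k - 1),
      g 1 (v (2 * m + 2)) + g 1 (v (2 * m + 3)) ≤ S := by
    intro m hm
    rw [Finset.mem_range] at hm
    have hadj : G.Adj (v (2 * m + 2)) (v (2 * m + 2 + 1)) := by
      apply hadjc
      rw [Finset.mem_Icc]
      omega
    have := key _ _ hadj
    have e : 2 * m + 2 + 1 = 2 * m + 3 := by ring
    rw [e] at this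
    exact this
  -- Sum the lower bounds
  have hlowsum : (k : ℝ) * (2 - g 1 q) ≤
      ∑ m ∈ Finset.range k, (g 1 (v (2 * m + 1)) + g 1 (v (2 * m + 2))) := by
    calc (k : ℝ) * (2 - g 1 q) = ∑ _m ∈ Finset.range k, (2 - g 1 q) := by
          rw [Finset.sum_const, Finset.card_range, nsmul_eq_mul]
      _ ≤ _ := Finset.sum_le_sum hlow
  -- Sum the upper bounds
  have hupsum : ∑ m ∈ Finset.range (k - 1), (g 1 (v (2 * m + 2)) + g 1 (v (2 * m + 3))) ≤
      ((k : ℝ) - 1) * S := by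
    calc ∑ m ∈ Finset.range (k - 1), (g 1 (v (2 * m + 2)) + g 1 (v (2 * m + 3)))
        ≤ ∑ _m ∈ Finset.range (k - 1), S := Finset.sum_le_sum hup
      _ = ((k - 1 : ℕ) : ℝ) * S := by
          rw [Finset.sum_const, Finset.card_range, nsmul_eq_mul]
      _ = ((k : ℝ) - 1) * S := by
          have : ((k - 1 : ℕ) : ℝ) = (k : ℝ) - 1 := by
            have : (1 : ℕ) ≤ k := by omega
            push_cast [this]
            ring
          rw [this]
  -- Pairing identity
  have hpair := pair_sum (fun j => g 1 (v j)) (k - 1)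
  have hk1 : k - 1 + 1 = k := by omega
  rw [hk1] at hpair
  -- Combine
  have hb0 := (hbound 1 q).1
  have hb1 := (hbound 1 q).2
  have hkr : (2 : ℝ) ≤ (k : ℝ) := by exact_mod_cast hk
  have hmain : ((k : ℝ) + 1) * S ≥ (k : ℝ) + 2 := by
    nlinarith [hlowsum, hupsum, hpair, hA, hB, hb0, hb1,
      mul_nonneg (by linarith : (0 : ℝ) ≤ (k : ℝ) - 2) (by linarith : (0 : ℝ) ≤ 1 - g 1 q)]
  have hkpos : (0 : ℝ) < (k : ℝ) + 1 := by linarith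
  have hdiv : 1 / ((k : ℝ) + 1) ≤ S - 1 := by
    rw [div_le_iff₀ hkpos]
    nlinarith
  linarith
end

section
/- Let G be a connected graph with χ(G) > 2 and let q be the chosen vertex. Then the optimal value of the LP relaxation of POP1 satisfies ν(POP1) ≥ 2 + 1/|V| > 2. -/
/-!
Write `a = g₁(q)` and `S = ∑ᵢ gᵢ(q)`. Summing the layered edge constraints over `i ≥ 2`
telescopes to `g₁(u) + g₁(v) ≤ S` on every edge, while the first-layer constraint gives
`g₁(u) + g₁(v) ≥ 2 - a`. Along a closed walk `q = w₀, …, w_{2k+1} = q` the values `g₁(w_{2t})`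
therefore drop by at most `S + a - 2` per double step, and closing the walk yields
`2k + (2 - k) a ≤ (k + 1) S`. Since `g₁ ≤ a` everywhere, an edge at `q` forces `2/3 ≤ a`, and
with `a ≤ 1` this gives `S ≥ 1 + 1/max(3, k + 1)`.
A non-bipartite connected graph has an edge joining two vertices whose distances from `q` have
the same parity, hence an odd closed walk through `q` with `k + 1 ≤ |V|`.
-/

open Finset

theorem sum_Icc_two_sub_one_sub {M : Type*} [AddCommGroup M] (f : ℕ → M) {H : ℕ} (hH : 1 ≤ H) :
    ∑ i ∈ Icc 2 H, (f (i - 1) - f i) = f 1 - f H := by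
  induction H, hH using Nat.le_induction with
  | base => simp
  | succ H hH ih =>
    rw [sum_Icc_succ_top (by omega), ih, Nat.add_sub_cancel]
    abel

theorem sum_Icc_two_sub_one {M : Type*} [AddCommGroup M] (f : ℕ → M) {H : ℕ} (hH : 1 ≤ H) :
    ∑ i ∈ Icc 2 H, f (i - 1) = ∑ i ∈ Icc 1 H, f i - f H := by
  induction H, hH using Nat.le_induction with
  | base => simp
  | succ H hH ih =>
    rw [sum_Icc_succ_top (by omega), sum_Icc_succ_top (by omega), ih, Nat.add_sub_cancel]
    abel

theorem layer_sum_le_objective {V : Type*} {H : ℕ} (hH : 1 ≤ H) {q u v : V} {g : ℕ → V → ℝ}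
    (hgH : ∀ v : V, g H v = 0)
    (hlayers : ∀ i ∈ Icc 2 H, (g (i - 1) u - g i u) + (g (i - 1) v - g i v) ≤ g (i - 1) q) :
    g 1 u + g 1 v ≤ ∑ i ∈ Icc 1 H, g i q := by
  have hsum := sum_le_sum hlayers
  rwa [sum_add_distrib, sum_Icc_two_sub_one_sub (g · u) hH, sum_Icc_two_sub_one_sub (g · v) hH,
    sum_Icc_two_sub_one (g · q) hH, hgH, hgH, hgH, sub_zero, sub_zero, sub_zero] at hsum

theorem closed_chain_bound {x : ℕ → ℝ} {a S : ℝ} {k : ℕ} (h0 : x 0 = a) (hend : x (2 * k + 1) = a)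
    (hlo : ∀ j < 2 * k + 1, 2 - a ≤ x j + x (j + 1))
    (hhi : ∀ j < 2 * k + 1, x j + x (j + 1) ≤ S) :
    2 * k + (2 - k) * a ≤ (k + 1) * S := by
  have heven : ∀ t ≤ k, a + t * (2 - a - S) ≤ x (2 * t) := by
    intro t
    induction t with
    | zero => simp [h0]
    | succ t ih =>
      intro ht
      have hup := hhi (2 * t) (by omega)
      have hdown := hlo (2 * t + 1) (by omega)
      rw [show 2 * (t + 1) = 2 * t + 1 + 1 by ring]
      push_cast
      linarith [ih (by omega)]
  have hlast := hhi (2 * k) (by omega)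
  rw [hend] at hlast
  linarith [heven k le_rfl]

theorem one_add_one_div_le_of_closed_chain_bound {a S : ℝ} {k n : ℕ} (ha : 2 / 3 ≤ a) (ha1 : a ≤ 1)
    (h : 2 * k + (2 - k) * a ≤ (k + 1) * S) (hn3 : 3 ≤ n) (hkn : k + 1 ≤ n) :
    1 + 1 / (n : ℝ) ≤ S := by
  rcases le_or_gt k 1 with hk | hk
  · have hS : 4 / 3 ≤ S := by interval_cases k <;> push_cast at h <;> linarith
    have : 1 / (n : ℝ) ≤ 1 / 3 := one_div_le_one_div_of_le (by norm_num) (by exact_mod_cast hn3)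
    linarith
  · have hk2 : (2 : ℝ) ≤ k := by exact_mod_cast hk
    have hkS : (k : ℝ) + 2 ≤ (k + 1) * S := by nlinarith
    have hS : 1 + 1 / ((k : ℝ) + 1) ≤ S := by
      rw [one_add_div (by positivity), div_le_iff₀ (by positivity)]
      linarith
    have : 1 / (n : ℝ) ≤ 1 / ((k : ℝ) + 1) :=
      one_div_le_one_div_of_le (by positivity) (by exact_mod_cast hkn)
    linarith

namespace SimpleGraph

variable {V : Type*} {G : SimpleGraph V}

theorem exists_adj_dist_mod_two_eq (hchrom : ¬G.Colorable 2) (q : V) :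
    ∃ u v, G.Adj u v ∧ G.dist q u % 2 = G.dist q v % 2 := by
  by_contra! h
  apply hchrom
  simpa using (Coloring.mk (fun v => (G.dist q v : ZMod 2)) fun huv heq =>
    h _ _ huv ((ZMod.natCast_eq_natCast_iff' _ _ 2).mp heq)).colorable

theorem Connected.dist_lt_card [Fintype V] (hconn : G.Connected) (u v : V) :
    G.dist u v < Fintype.card V := by
  obtain ⟨p, hp⟩ := hconn.exists_walk_length_eq_dist u v
  exact hp ▸ (p.isPath_of_length_eq_dist hp).length_lt

theorem Connected.exists_odd_loop_length_lt [Fintype V] (hconn : G.Connected)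
    (hchrom : ¬G.Colorable 2) (q : V) :
    ∃ p : G.Walk q q, Odd p.length ∧ p.length < 2 * Fintype.card V := by
  obtain ⟨u, v, huv, hpar⟩ := exists_adj_dist_mod_two_eq hchrom q
  obtain ⟨pu, hpu⟩ := hconn.exists_walk_length_eq_dist q u
  obtain ⟨pv, hpv⟩ := hconn.exists_walk_length_eq_dist q v
  have hlen : (pu.append (Walk.cons huv pv.reverse)).length = G.dist q u + G.dist q v + 1 := by
    simp only [Walk.length_append, Walk.length_cons, Walk.length_reverse, hpu, hpv]
    omega
  refine ⟨pu.append (Walk.cons huv pv.reverse), ?_, ?_⟩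
  · rw [hlen, Nat.odd_iff]
    omega
  · have := hconn.dist_lt_card q u
    have := hconn.dist_lt_card q v
    omega

end SimpleGraph

theorem pop1_objective_ge_of_odd_loop {V : Type*} {G : SimpleGraph V} {H : ℕ} (hH : 1 ≤ H)
    {q : V} {g : ℕ → V → ℝ} (hq1 : g 1 q ≤ 1) (hgH : ∀ v : V, g H v = 0)
    (hedge1 : ∀ u v : V, G.Adj u v → g 1 u + g 1 v ≥ 2 - g 1 q)
    (hedge2 : ∀ u v : V, G.Adj u v → ∀ i ∈ Icc 2 H,
      (g (i - 1) u - g i u) + (g (i - 1) v - g i v) ≤ g (i - 1) q)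
    (hqmax : ∀ v : V, g 1 v ≤ g 1 q)
    (p : G.Walk q q) (hodd : Odd p.length) {n : ℕ} (hn3 : 3 ≤ n) (hlen : p.length < 2 * n) :
    1 + 1 / (n : ℝ) ≤ ∑ i ∈ Icc 1 H, g i q := by
  obtain ⟨k, hk⟩ := hodd
  have hadj : ∀ j < 2 * k + 1, G.Adj (p.getVert j) (p.getVert (j + 1)) :=
    fun j hj => p.adj_getVert_succ (by omega)
  have hend : p.getVert (2 * k + 1) = q := hk ▸ p.getVert_length
  have ha : 2 / 3 ≤ g 1 q := by
    have := hedge1 _ _ (hadj 0 (by omega))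
    rw [p.getVert_zero] at this
    linarith [hqmax (p.getVert 1)]
  have hchain := closed_chain_bound (x := fun j => g 1 (p.getVert j)) (a := g 1 q)
    (by simp) (by simp [hend]) (fun j hj => by linarith [hedge1 _ _ (hadj j hj)])
    (fun j hj => layer_sum_le_objective hH hgH (hedge2 _ _ (hadj j hj)))
  exact one_add_one_div_le_of_closed_chain_bound ha hq1 hchain hn3 (by omega)

theorem pop1_lp_value_nonbipartite_general {V : Type*} [Fintype V] (G : SimpleGraph V)
    (hconn : G.Connected) (hchrom : ¬ G.Colorable 2)
    (H : ℕ) (hH : 2 ≤ H) (q : V) (g : ℕ → V → ℝ)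
    (hbound : ∀ i v, 0 ≤ g i v ∧ g i v ≤ 1)
    (hgH : ∀ v : V, g H v = 0)
    (hedge1 : ∀ u v : V, G.Adj u v → g 1 u + g 1 v ≥ 2 - g 1 q)
    (hedge2 : ∀ u v : V, G.Adj u v → ∀ i ∈ Icc 2 H,
      (g (i - 1) u - g i u) + (g (i - 1) v - g i v) ≤ g (i - 1) q)
    (hqmax : ∀ v : V, ∀ i ∈ Icc 1 H, g i q - g i v ≥ 0) :
    1 + ∑ i ∈ Icc 1 H, g i q ≥ 2 + 1 / (Fintype.card V : ℝ) ∧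
    (2 : ℝ) + 1 / (Fintype.card V : ℝ) > 2 := by
  have hn3 : 3 ≤ Fintype.card V := by
    by_contra! h
    exact hchrom (G.colorable_of_fintype.mono (by omega))
  obtain ⟨p, hodd, hlen⟩ := hconn.exists_odd_loop_length_lt hchrom q
  have hS := pop1_objective_ge_of_odd_loop (by omega) (hbound 1 q).2 hgH hedge1 hedge2
    (fun v => by linarith [hqmax v 1 (by simp; omega)]) p hodd hn3 hlen
  have hpos : (0 : ℝ) < 1 / (Fintype.card V : ℝ) := by positivity
  constructor <;> linarith

/-- Let `G` be a connected graph with chromatic number `> 2` and let `q` be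
the chosen vertex. Then the LP relaxation of POP1 satisfies
`ν(POP1) ≥ 2 + 1/|V| > 2`: every feasible solution has objective value at least
`2 + 1/|V|`. -/
theorem pop1_lp_value_nonbipartite {V : Type*} [Fintype V] (G : SimpleGraph V)
    (hconn : G.Connected) (hchrom : ¬ G.Colorable 2)
    (H : ℕ) (hH : 2 ≤ H) (q : V) (g : ℕ → V → ℝ)
    (hbound : ∀ i v, 0 ≤ g i v ∧ g i v ≤ 1)
    (hgH : ∀ v : V, g H v = 0)
    (hmono : ∀ v : V, ∀ i ∈ Icc 2 H, g (i - 1) v - g i v ≥ 0)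
    (hedge1 : ∀ u v : V, G.Adj u v → g 1 u + g 1 v ≥ 2 - g 1 q)
    (hedge2 : ∀ u v : V, G.Adj u v → ∀ i ∈ Icc 2 H,
      (g (i - 1) u - g i u) + (g (i - 1) v - g i v) ≤ g (i - 1) q)
    (hqmax : ∀ v : V, ∀ i ∈ Icc 1 H, g i q - g i v ≥ 0) :
    1 + ∑ i ∈ Icc 1 H, g i q ≥ 2 + 1 / (Fintype.card V : ℝ) ∧
    (2 : ℝ) + 1 / (Fintype.card V : ℝ) > 2 :=
  pop1_lp_value_nonbipartite_general G hconn hchrom H hH q g hbound hgH hedge1 hedge2 hqmax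
end

section
/- For the complete graph K_3 with vertices q, v_1, v_2 and any H ≥ 3, every feasible solution of the LP relaxation of POP2 satisfies ∑_{i=1}^H g_{i,q} ≥ 2 − (1/2)·g_{1,q} ≥ 3/2, hence ν(POP2) ≥ 5/2 on K_3. -/
open Finset

/-- For the complete graph `K₃` (here `Fin 3` with `q = 0`) and any `H ≥ 3`,
every feasible solution of the LP relaxation of POP2 satisfies
`∑_{i=1}^H g i q ≥ 2 − (1/2)·g 1 q ≥ 3/2`, hence `1 + ∑_{i=1}^H g i q ≥ 5/2`. -/
theorem pop2_k3_bound (H : ℕ) (hH : 3 ≤ H) (g : ℕ → Fin 3 → ℝ)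
    (hbound : ∀ i v, 0 ≤ g i v ∧ g i v ≤ 1)
    (hgH : ∀ v : Fin 3, g H v = 0)
    (hmono : ∀ v : Fin 3, ∀ i ∈ Icc 2 H, g (i - 1) v - g i v ≥ 0)
    (hedge1 : ∀ u v : Fin 3, (⊤ : SimpleGraph (Fin 3)).Adj u v →
      g 1 u + g 1 v ≥ 2 - g 1 0)
    (hedge2 : ∀ u v : Fin 3, (⊤ : SimpleGraph (Fin 3)).Adj u v → ∀ i ∈ Icc 2 H,
      (g (i - 1) u - g i u) + (g (i - 1) v - g i v) ≤ g (i - 1) 0)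
    (hqmax : ∀ v : Fin 3, ∀ i ∈ Icc 1 H, g i 0 - g i v ≥ 0)
    (hnbr : ∀ v : Fin 3, (⊤ : SimpleGraph (Fin 3)).Adj 0 v → ∀ i ∈ Icc 1 (H - 1),
      g (i + 1) 0 - g i v ≥ 0) :
    ∑ i ∈ Icc 1 H, g i 0 ≥ 2 - (1 / 2) * g 1 0 ∧
    2 - (1 / 2) * g 1 0 ≥ 3 / 2 ∧
    1 + ∑ i ∈ Icc 1 H, g i 0 ≥ 5 / 2 := by
  have hadj : (⊤ : SimpleGraph (Fin 3)).Adj 1 2 := by decide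
  have hadj01 : (⊤ : SimpleGraph (Fin 3)).Adj 0 1 := by decide
  have hadj02 : (⊤ : SimpleGraph (Fin 3)).Adj 0 2 := by decide
  have h1mem : (1 : ℕ) ∈ Icc 1 (H - 1) := by
    simp only [mem_Icc]; omega
  have h2mem : (2 : ℕ) ∈ Icc 1 (H - 1) := by
    simp only [mem_Icc]; omega
  have h2mem' : (2 : ℕ) ∈ Icc 2 H := by simp only [mem_Icc]; omega
  have he1 := hedge1 1 2 hadj
  have he2 := hedge2 1 2 hadj 2 h2mem'
  simp only [show (2 : ℕ) - 1 = 1 from rfl] at he2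
  have hn11 := hnbr 1 hadj01 1 h1mem
  have hn21 := hnbr 2 hadj02 1 h1mem
  have hn12 := hnbr 1 hadj01 2 h2mem
  have hn22 := hnbr 2 hadj02 2 h2mem
  -- sum ≥ g 1 0 + g 2 0 + g 3 0
  have hsub : Icc 1 3 ⊆ Icc 1 H := Icc_subset_Icc le_rfl hH
  have hsum3 : ∑ i ∈ Icc 1 3, g i 0 ≤ ∑ i ∈ Icc 1 H, g i 0 :=
    Finset.sum_le_sum_of_subset_of_nonneg hsub (fun i _ _ => (hbound i 0).1)
  have hval : ∑ i ∈ Icc 1 3, g i 0 = g 1 0 + g 2 0 + g 3 0 := by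
    show ∑ i ∈ ({1, 2, 3} : Finset ℕ), g i 0 = _
    simp [Finset.sum_insert, Finset.mem_insert]
    ring
  have hmain : ∑ i ∈ Icc 1 H, g i 0 ≥ 2 - (1 / 2) * g 1 0 := by
    have := (hbound 1 0).2
    linarith [hsum3, hval, he1, he2, hn11, hn21, hn12, hn22]
  refine ⟨hmain, ?_, ?_⟩ <;> linarith [(hbound 1 0).2]
end

section
/- Any integral feasible solution of POP1 (with g_{i,v} ∈ {0,1}) induces a proper coloring of G: defining c(v) as the unique i with g_{i-1,v} = 1 (or i = 1) and g_{i,v} = 0, equivalently c(v) = 1 + |{i : g_{i,v} = 1}|, yields c(u) ≠ c(v) for every edge uv, c(v) ≤ c(q) for all v, and the objective value 1 + ∑_{i=1}^H g_{i,q} equals the number of colors c(q) used. -/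
open Finset

/-- Any integral feasible solution of POP1 (all `g i v ∈ {0,1}`) induces a
proper coloring of `G` via `c v := 1 + ∑_{i=1}^H g i v` (the unique color of `v`):
adjacent vertices get different colors, every vertex's color is at most that of `q`, and
the objective value `1 + ∑_{i=1}^H g i q` equals the number `c q` of colors used. -/
theorem pop1_integral_gives_coloring {V : Type*} [Fintype V] (G : SimpleGraph V)
    (H : ℕ) (hH : 2 ≤ H) (q : V) (g : ℕ → V → ℝ)
    (hbin : ∀ i v, g i v = 0 ∨ g i v = 1)
    (hgH : ∀ v : V, g H v = 0)
    (hmono : ∀ v : V, ∀ i ∈ Icc 2 H, g (i - 1) v - g i v ≥ 0)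
    (hedge1 : ∀ u v : V, G.Adj u v → g 1 u + g 1 v ≥ 2 - g 1 q)
    (hedge2 : ∀ u v : V, G.Adj u v → ∀ i ∈ Icc 2 H,
      (g (i - 1) u - g i u) + (g (i - 1) v - g i v) ≤ g (i - 1) q)
    (hqmax : ∀ v : V, ∀ i ∈ Icc 1 H, g i q - g i v ≥ 0)
    (c : V → ℝ) (hc : ∀ v : V, c v = 1 + ∑ i ∈ Icc 1 H, g i v) :
    (∀ u v : V, G.Adj u v → c u ≠ c v) ∧
    (∀ v : V, c v ≤ c q) ∧
    1 + ∑ i ∈ Icc 1 H, g i q = c q := by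
  classical
  -- downward propagation of 1's
  have hstep : ∀ v j, 2 ≤ j → j ≤ H → g j v = 1 → g (j - 1) v = 1 := by
    intro v j h2 hjH hj1
    have := hmono v j (mem_Icc.mpr ⟨h2, hjH⟩)
    rcases hbin (j - 1) v with h | h
    · rw [h, hj1] at this; linarith
    · exact h
  have hlow : ∀ v i j, 1 ≤ i → i ≤ j → j ≤ H → g j v = 1 → g i v = 1 := by
    intro v i j hi hij hjH hj1
    induction j with
    | zero => omega
    | succ n ih =>
      rcases Nat.lt_or_ge i (n + 1) with hlt | hge
      · have h2 : 2 ≤ n + 1 := by omega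
        have := hstep v (n + 1) h2 hjH hj1
        simp only [Nat.add_sub_cancel] at this
        exact ih (by omega) (by omega) this
      · have : i = n + 1 := by omega
        rw [this]; exact hj1
  set T : V → Finset ℕ := fun v => (Icc 1 H).filter (fun i => g i v = 1) with hTdef
  have hsum : ∀ v, ∑ i ∈ Icc 1 H, g i v = ((T v).card : ℝ) := by
    intro v
    rw [hTdef]
    rw [card_filter]
    push_cast
    apply sum_congr rfl
    intro i _
    rcases hbin i v with h | h <;> simp [h]
  have hT : ∀ v, T v = Icc 1 (T v).card := by
    intro v
    ext i
    simp only [hTdef, mem_filter, mem_Icc]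
    constructor
    · rintro ⟨⟨h1, hiH⟩, hg⟩
      refine ⟨h1, ?_⟩
      have hsub : Icc 1 i ⊆ (Icc 1 H).filter (fun j => g j v = 1) := by
        intro j hj
        rw [mem_Icc] at hj
        exact mem_filter.mpr ⟨mem_Icc.mpr ⟨hj.1, le_trans hj.2 hiH⟩,
          hlow v j i hj.1 hj.2 hiH hg⟩
      have := card_le_card hsub
      simpa using this
    · rintro ⟨h1, hk⟩
      by_contra hcon
      push_neg at hcon
      -- i ≤ card ≤ H
      have hcardH : (T v).card ≤ H := by
        have := card_le_card (filter_subset (fun i => g i v = 1) (Icc 1 H))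
        simpa [hTdef] using this
      have hiH : i ≤ H := le_trans hk hcardH
      have hgi : g i v ≠ 1 := by
        intro h
        exact absurd h (hcon ⟨h1, hiH⟩)
      -- then T v ⊆ Icc 1 (i-1)
      have hsub : (Icc 1 H).filter (fun j => g j v = 1) ⊆ Icc 1 (i - 1) := by
        intro j hj
        simp only [mem_filter, mem_Icc] at hj
        rw [mem_Icc]
        refine ⟨hj.1.1, ?_⟩
        by_contra hji
        push_neg at hji
        have : i ≤ j := by omega
        exact hgi (hlow v i j h1 this hj.1.2 hj.2)
      have := card_le_card hsub
      simp only [Nat.card_Icc] at this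
      omega
  -- key facts
  have hcardlt : ∀ v, (T v).card < H := by
    intro v
    have hcardH : (T v).card ≤ H := by
      have := card_le_card (filter_subset (fun i => g i v = 1) (Icc 1 H))
      simpa [hTdef] using this
    rcases lt_or_eq_of_le hcardH with h | h
    · exact h
    · exfalso
      have : H ∈ T v := by rw [hT v, h]; exact mem_Icc.mpr ⟨by omega, le_refl _⟩
      simp only [hTdef, mem_filter] at this
      rw [hgH v] at this
      norm_num at this
  have hmem : ∀ v i, 1 ≤ i → i ≤ H → (g i v = 1 ↔ i ≤ (T v).card) := by
    intro v i h1 hiH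
    constructor
    · intro hg
      have : i ∈ T v := mem_filter.mpr ⟨mem_Icc.mpr ⟨h1, hiH⟩, hg⟩
      rw [hT v, mem_Icc] at this
      exact this.2
    · intro hk
      have : i ∈ T v := by rw [hT v]; exact mem_Icc.mpr ⟨h1, hk⟩
      exact (mem_filter.mp this).2
  refine ⟨?_, ?_, (hc q).symm⟩
  · intro u v huv hcuv
    rw [hc u, hc v, hsum u, hsum v] at hcuv
    have hk : (T u).card = (T v).card := by
      have : ((T u).card : ℝ) = ((T v).card : ℝ) := by linarith
      exact_mod_cast this
    set k := (T v).card with hkdef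
    rcases Nat.eq_zero_or_pos k with hk0 | hk1
    · -- k = 0: g 1 u = g 1 v = 0
      have hgu : g 1 u = 0 := by
        rcases hbin 1 u with h | h
        · exact h
        · exfalso
          have := (hmem u 1 le_rfl (by omega)).mp h
          omega
      have hgv : g 1 v = 0 := by
        rcases hbin 1 v with h | h
        · exact h
        · exfalso
          have := (hmem v 1 le_rfl (by omega)).mp h
          omega
      have h1q : g 1 q ≤ 1 := by rcases hbin 1 q with h | h <;> rw [h] <;> norm_num
      have := hedge1 u v huv
      rw [hgu, hgv] at this
      linarith
    · -- k ≥ 1: use i = k+1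
      have hkH : k < H := hcardlt v
      have h2 : 2 ≤ k + 1 := by omega
      have hk1H : k + 1 ≤ H := by omega
      have hgku : g k u = 1 := (hmem u k hk1 (by omega)).mpr (by rw [hk])
      have hgkv : g k v = 1 := (hmem v k hk1 (by omega)).mpr le_rfl
      have hgk1u : g (k + 1) u = 0 := by
        rcases hbin (k + 1) u with h | h
        · exact h
        · have := (hmem u (k + 1) (by omega) hk1H).mp h; omega
      have hgk1v : g (k + 1) v = 0 := by
        rcases hbin (k + 1) v with h | h
        · exact h
        · have := (hmem v (k + 1) (by omega) hk1H).mp h; omega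
      have hkq : g k q ≤ 1 := by rcases hbin k q with h | h <;> rw [h] <;> norm_num
      have := hedge2 u v huv (k + 1) (mem_Icc.mpr ⟨h2, hk1H⟩)
      simp only [Nat.add_sub_cancel] at this
      rw [hgku, hgkv, hgk1u, hgk1v] at this
      linarith
  · intro v
    rw [hc v, hc q]
    have : ∑ i ∈ Icc 1 H, g i v ≤ ∑ i ∈ Icc 1 H, g i q := by
      apply sum_le_sum
      intro i hi
      have := hqmax v i hi
      linarith
    linarith
end
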